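/- (Optimized accuracy of the soft-min MFG fixed point.) Under Assumption (Lip), L_p < |𝒳|c_min, suppose there is a unique triple (μ̂, Q*_{μ̂}, π̂) with π̂ = argmin_e Q*_{μ̂}, μ̂ = P^{π̂,μ̂}μ̂, and Q*_{μ̂} the unique fixed point of B_{μ̂}; let δ > 0 be the action gap of Q*_{μ̂}, assume φ_max − 1/δ > 0, and take φ = φ_max − 1/δ. Then ‖μ*φ − μ̂‖₁ ≤ (2√|𝒜|·δ·(1−γ)/(L_f + (γ/(1−γ))L_p‖f‖∞))·exp(1 − φ_max δ) and ‖Q*_{μ*φ} − Q*_{μ̂}‖∞ ≤ 2√|𝒜|·δ·exp(1 − φ_max δ). -/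

import Mathlib

/-!
Let `K_{π,μ}` be the transition matrix `x' ↦ ∑ₐ π(a|x') p(·|x',a,μ)`. Its entries are at least
`c_min`, so it shrinks the ℓ¹ norm of every signed vector of total mass zero by the factor
`1 - |𝒳| c_min` (Dobrushin). Subtracting the stationarity equations of `μ*` and `μ̂` gives
`|𝒳| c_min ‖μ* - μ̂‖₁ ≤ L_p ‖μ* - μ̂‖₁ + maxₓ ‖softmin_φ Q*_{μ*}(x) - argmin_e Q*_{μ̂}(x)‖₁`.
The policy distance is at most `2φ ‖Q*_{μ*} - Q*_{μ̂}‖∞ + 2|𝒜| e^{-φδ}`: softmin is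
`2φ`-Lipschitz from sup norm to ℓ¹, and the action gap confines all but `|𝒜| e^{-φδ}` of its mass
to the minimisers. Since `B_μ` is a `γ`-contraction, `μ ↦ Q*_μ` is `κ`-Lipschitz with
`κ = (L_f + γ L_p ‖f‖∞ / (1 - γ)) / (1 - γ)`, and `φ_max` is defined so that
`|𝒳| c_min - L_p = φ_max |𝒜| κ`. For `φ = φ_max - 1/δ` and `|𝒜| ≥ 2` this leaves
`κ ‖μ* - μ̂‖₁ ≤ 2δ e^{-φδ} = 2δ e^{1 - φ_max δ}`; for `|𝒜| = 1` the two policies coincide and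
`μ* = μ̂`.
-/
open Finset Filter
open scoped Classical

noncomputable section

variable {X A : Type*}

/-- A probability vector on a finite set. -/
def IsProb [Fintype X] (μ : X → ℝ) : Prop := (∀ x, 0 ≤ μ x) ∧ ∑ x, μ x = 1

/-- ℓ¹ norm of a signed measure / vector on a finite set. -/
def l1 [Fintype X] (μ : X → ℝ) : ℝ := ∑ x, |μ x|

/-- Sup norm of a Q-table. -/
def supQ [Fintype X] [Fintype A] [Nonempty X] [Nonempty A] (Q : X → A → ℝ) : ℝ :=
  Finset.univ.sup' Finset.univ_nonempty (fun xa : X × A => |Q xa.1 xa.2|)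

/-- Minimum of a row of a Q-table (minimum over actions). -/
def minRow [Fintype A] [Nonempty A] (q : A → ℝ) : ℝ :=
  Finset.univ.inf' Finset.univ_nonempty q

/-- The soft-min distribution over actions with parameter φ. -/
def softmin [Fintype A] (φ : ℝ) (z : A → ℝ) (a : A) : ℝ :=
  Real.exp (-φ * z a) / ∑ a', Real.exp (-φ * z a')

/-- The argmin_e policy: uniform over the minimizers, zero elsewhere. -/
def argminE [Fintype A] [Nonempty A] (q : A → ℝ) (a : A) : ℝ :=
  if q a = minRow q then (1 : ℝ) / (Finset.univ.filter fun a' => q a' = minRow q).card else 0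

/-- (P^{π,μ} ν)(x) = ∑_{x'} ν(x') ∑_a π(a|x') p(x|x',a,μ). -/
def Ppush [Fintype X] [Fintype A] (p : X → A → (X → ℝ) → X → ℝ)
    (π : X → A → ℝ) (μ ν : X → ℝ) (x : X) : ℝ :=
  ∑ x', ν x' * ∑ a, π x' a * p x' a μ x

/-- P₂(Q,μ) = P^{softmin_φ Q, μ} μ − μ. -/
def P2 [Fintype X] [Fintype A] (φ : ℝ) (p : X → A → (X → ℝ) → X → ℝ)
    (Q : X → A → ℝ) (μ : X → ℝ) (x : X) : ℝ :=
  Ppush p (fun x' => softmin φ (Q x')) μ μ x - μ x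

/-- The Bellman operator (B_μ Q)(x,a) = f(x,a,μ) + γ ∑_{x'} p(x'|x,a,μ) min_{a'} Q(x',a'). -/
def bell [Fintype X] [Fintype A] [Nonempty A]
    (f : X → A → (X → ℝ) → ℝ) (p : X → A → (X → ℝ) → X → ℝ) (γ : ℝ)
    (μ : X → ℝ) (Q : X → A → ℝ) (x : X) (a : A) : ℝ :=
  f x a μ + γ * ∑ x', p x a μ x' * minRow (Q x')

/-- T₂(Q,μ) = B_μ Q − Q. -/
def T2 [Fintype X] [Fintype A] [Nonempty A]
    (f : X → A → (X → ℝ) → ℝ) (p : X → A → (X → ℝ) → X → ℝ) (γ : ℝ)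
    (Q : X → A → ℝ) (μ : X → ℝ) (x : X) (a : A) : ℝ :=
  bell f p γ μ Q x a - Q x a

section Basic

variable [Fintype X] [Fintype A]

lemma l1_nonneg (μ : X → ℝ) : 0 ≤ l1 μ :=
  sum_nonneg fun x _ => abs_nonneg (μ x)

lemma l1_add_le (u v : X → ℝ) : l1 (fun x => u x + v x) ≤ l1 u + l1 v :=
  (sum_le_sum fun x _ => abs_add_le (u x) (v x)).trans_eq sum_add_distrib

lemma IsProb.l1_eq_one {w : X → ℝ} (hw : IsProb w) : l1 w = 1 :=
  (sum_congr rfl fun x _ => abs_of_nonneg (hw.1 x)).trans hw.2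

lemma abs_sum_mul_le_l1_mul (w : X → ℝ) {g : X → ℝ} {M : ℝ} (hg : ∀ x, |g x| ≤ M) :
    |∑ x, w x * g x| ≤ l1 w * M := by
  rw [l1, sum_mul]
  refine (abs_sum_le_sum_abs _ _).trans (sum_le_sum fun x _ => ?_)
  rw [abs_mul]
  exact mul_le_mul_of_nonneg_left (hg x) (abs_nonneg _)

lemma IsProb.abs_sum_mul_le {w g : X → ℝ} {M : ℝ} (hw : IsProb w) (hg : ∀ x, |g x| ≤ M) :
    |∑ x, w x * g x| ≤ M := by
  simpa [hw.l1_eq_one] using abs_sum_mul_le_l1_mul w hg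

lemma IsProb.le_sum_mul {w g : X → ℝ} {c : ℝ} (hw : IsProb w) (hg : ∀ x, c ≤ g x) :
    c ≤ ∑ x, w x * g x :=
  calc c = ∑ x, w x * c := by rw [← sum_mul, hw.2, one_mul]
    _ ≤ ∑ x, w x * g x := sum_le_sum fun x _ => mul_le_mul_of_nonneg_left (hg x) (hw.1 x)

lemma IsProb.mix {π : A → ℝ} {P : A → X → ℝ} (hπ : IsProb π) (hP : ∀ a, IsProb (P a)) :
    IsProb (fun x => ∑ a, π a * P a x) := by
  refine ⟨fun x => sum_nonneg fun a _ => mul_nonneg (hπ.1 a) ((hP a).1 x), ?_⟩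
  rw [sum_comm]
  simp [← mul_sum, (hP _).2, hπ.2]

lemma l1_sum_mul_le (c : A → ℝ) (g : A → X → ℝ) :
    l1 (fun x => ∑ a, c a * g a x) ≤ ∑ a, |c a| * l1 (g a) :=
  calc ∑ x, |∑ a, c a * g a x| ≤ ∑ x, ∑ a, |c a| * |g a x| :=
        sum_le_sum fun x _ => (abs_sum_le_sum_abs _ _).trans_eq (by simp only [abs_mul])
    _ = ∑ a, |c a| * l1 (g a) := by rw [sum_comm]; simp only [l1, mul_sum]

lemma l1_sub_eq_zero_of_card_eq_one (hA : Fintype.card A = 1) {π π' : A → ℝ}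
    (hπ : ∑ a, π a = 1) (hπ' : ∑ a, π' a = 1) : l1 (fun a => π a - π' a) = 0 := by
  obtain ⟨a, ha⟩ := Fintype.card_eq_one_iff.mp hA
  have huniv : (univ : Finset A) = {a} :=
    eq_singleton_iff_unique_mem.mpr ⟨mem_univ a, fun b _ => ha b⟩
  rw [huniv, sum_singleton] at hπ hπ'
  simp [l1, huniv, hπ, hπ']

lemma minRow_le [Nonempty A] (q : A → ℝ) (a : A) : minRow q ≤ q a :=
  inf'_le q (mem_univ a)

lemma exists_eq_minRow [Nonempty A] (q : A → ℝ) : ∃ a, q a = minRow q := by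
  obtain ⟨a, -, ha⟩ := exists_mem_eq_inf' univ_nonempty q
  exact ⟨a, ha.symm⟩

lemma abs_minRow_le [Nonempty A] {q : A → ℝ} {M : ℝ} (h : ∀ a, |q a| ≤ M) : |minRow q| ≤ M := by
  obtain ⟨a, ha⟩ := exists_eq_minRow q
  exact ha ▸ h a

lemma abs_minRow_sub_minRow_le [Nonempty A] {q q' : A → ℝ} {M : ℝ}
    (h : ∀ a, |q a - q' a| ≤ M) : |minRow q - minRow q'| ≤ M := by
  obtain ⟨a, ha⟩ := exists_eq_minRow q
  obtain ⟨a', ha'⟩ := exists_eq_minRow q'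
  have := minRow_le q a'
  have := minRow_le q' a
  rw [abs_sub_le_iff]
  constructor <;> linarith [(abs_le.mp (h a)).1, (abs_le.mp (h a')).2]

lemma abs_le_supQ [Nonempty X] [Nonempty A] (Q : X → A → ℝ) (x : X) (a : A) :
    |Q x a| ≤ supQ Q :=
  le_sup' (fun xa : X × A => |Q xa.1 xa.2|) (mem_univ (x, a))

lemma supQ_le [Nonempty X] [Nonempty A] {Q : X → A → ℝ} {M : ℝ} (h : ∀ x a, |Q x a| ≤ M) :
    supQ Q ≤ M :=
  sup'_le _ _ fun xa _ => h xa.1 xa.2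

end Basic

section Bellman

variable [Fintype X] [Fintype A] [Nonempty X] [Nonempty A]
  {f : X → A → (X → ℝ) → ℝ} {p : X → A → (X → ℝ) → X → ℝ} {γ : ℝ}

lemma abs_le_of_bell_eq (hγ0 : 0 ≤ γ) (hγ1 : γ < 1) {μ : X → ℝ} {F : ℝ}
    (hf : ∀ x a, |f x a μ| ≤ F) (hp : ∀ x a, IsProb (p x a μ))
    {Q : X → A → ℝ} (hQ : bell f p γ μ Q = Q) (x : X) (a : A) :
    |Q x a| ≤ F / (1 - γ) := by
  have hM : supQ Q ≤ F + γ * supQ Q := supQ_le fun x a => by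
    rw [← congrFun (congrFun hQ x) a, bell]
    refine (abs_add_le _ _).trans (add_le_add (hf x a) ?_)
    rw [abs_mul, abs_of_nonneg hγ0]
    exact mul_le_mul_of_nonneg_left
      ((hp x a).abs_sum_mul_le fun x' => abs_minRow_le (abs_le_supQ Q x')) hγ0
  rw [le_div_iff₀ (by linarith)]
  nlinarith [abs_le_supQ Q x a]

lemma supQ_sub_le_of_bell_eq (hγ0 : 0 ≤ γ) (hγ1 : γ < 1) {μ ν : X → ℝ} {F Lf Lp : ℝ}
    (hLf : ∀ x a, |f x a μ - f x a ν| ≤ Lf * l1 (fun y => μ y - ν y))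
    (hLp : ∀ x a, ∑ x', |p x a μ x' - p x a ν x'| ≤ Lp * l1 (fun y => μ y - ν y))
    (hp : ∀ x a, IsProb (p x a μ)) {Qμ Qν : X → A → ℝ}
    (hQμ : bell f p γ μ Qμ = Qμ) (hQν : bell f p γ ν Qν = Qν)
    (hQνF : ∀ x a, |Qν x a| ≤ F / (1 - γ)) :
    supQ (fun x a => Qμ x a - Qν x a)
      ≤ (Lf + γ / (1 - γ) * Lp * F) / (1 - γ) * l1 (fun y => μ y - ν y) := by
  set L := l1 (fun y => μ y - ν y)
  set M := supQ (fun x a => Qμ x a - Qν x a)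
  obtain ⟨x₀⟩ := ‹Nonempty X›
  obtain ⟨a₀⟩ := ‹Nonempty A›
  have hF : 0 ≤ F / (1 - γ) := (abs_nonneg _).trans (hQνF x₀ a₀)
  have hM : M ≤ Lf * L + γ * (M + Lp * L * (F / (1 - γ))) := supQ_le fun x a => by
    have hsplit : Qμ x a - Qν x a = (f x a μ - f x a ν) + γ *
        (∑ x', p x a μ x' * (minRow (Qμ x') - minRow (Qν x'))
          + ∑ x', (p x a μ x' - p x a ν x') * minRow (Qν x')) := by
      rw [← congrFun (congrFun hQμ x) a, ← congrFun (congrFun hQν x) a, bell, bell,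
        ← sum_add_distrib]
      simp only [mul_sub, sub_mul, sub_add_sub_cancel, sum_sub_distrib]
      ring
    rw [hsplit]
    refine (abs_add_le _ _).trans (add_le_add (hLf x a) ?_)
    rw [abs_mul, abs_of_nonneg hγ0]
    refine mul_le_mul_of_nonneg_left ((abs_add_le _ _).trans (add_le_add ?_ ?_)) hγ0
    · exact (hp x a).abs_sum_mul_le fun x' =>
        abs_minRow_sub_minRow_le fun a' => abs_le_supQ (fun x a => Qμ x a - Qν x a) x' a'
    · exact (abs_sum_mul_le_l1_mul _ fun x' => abs_minRow_le (hQνF x')).trans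
        (mul_le_mul_of_nonneg_right (hLp x a) hF)
  rw [div_mul_eq_mul_div, le_div_iff₀ (by linarith)]
  have : (Lf + γ / (1 - γ) * Lp * F) * L = Lf * L + γ * (Lp * L * (F / (1 - γ))) := by ring
  linarith

end Bellman

section Softmin

variable [Fintype A]

lemma softmin_nonneg (φ : ℝ) (z : A → ℝ) (a : A) : 0 ≤ softmin φ z a :=
  div_nonneg (Real.exp_pos _).le (sum_nonneg fun _ _ => (Real.exp_pos _).le)

lemma isProb_softmin [Nonempty A] (φ : ℝ) (z : A → ℝ) : IsProb (softmin φ z) := by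
  refine ⟨softmin_nonneg φ z, ?_⟩
  simp only [softmin]
  rw [← sum_div]
  exact div_self (sum_pos (fun _ _ => Real.exp_pos _) univ_nonempty).ne'

lemma isProb_argminE [Nonempty A] (q : A → ℝ) : IsProb (argminE q) := by
  have hk : 0 < (univ.filter fun a => q a = minRow q).card := by
    obtain ⟨a, ha⟩ := exists_eq_minRow q
    exact card_pos.mpr ⟨a, mem_filter.mpr ⟨mem_univ a, ha⟩⟩
  refine ⟨fun a => by unfold argminE; split_ifs <;> positivity, ?_⟩
  simp only [argminE]
  rw [← sum_filter, sum_const, nsmul_eq_mul]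
  field_simp

lemma sum_abs_sub_le_of_hasDerivWithinAt {g g' : A → ℝ → ℝ} {C : ℝ}
    (hg : ∀ a, ∀ t ∈ Set.Icc (0 : ℝ) 1, HasDerivWithinAt (g a) (g' a t) (Set.Icc 0 1) t)
    (hC : ∀ t ∈ Set.Icc (0 : ℝ) 1, ∑ a, |g' a t| ≤ C) :
    ∑ a, |g a 1 - g a 0| ≤ C := by
  set ε : A → ℝ := fun a => SignType.sign (g a 1 - g a 0)
  have hε : ∀ a, |ε a| ≤ 1 := fun a => by
    simp only [ε]
    cases SignType.sign (g a 1 - g a 0) <;> simp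
  have hF := norm_image_sub_le_of_norm_deriv_le_segment_01'
    (f := fun t => ∑ a, ε a * g a t) (f' := fun t => ∑ a, ε a * g' a t)
    (fun t ht => HasDerivWithinAt.fun_sum fun a _ => (hg a t ht).const_mul (ε a))
    (fun t ht => (abs_sum_le_sum_abs _ _).trans <| (sum_le_sum fun a _ => ?_).trans
      (hC t (Set.Ico_subset_Icc_self ht)))
  · refine (le_abs_self _).trans ?_
    simpa only [← mul_sub, ε, sign_mul_self, ← sum_sub_distrib, Real.norm_eq_abs] using hF
  · rw [abs_mul]
    exact mul_le_of_le_one_left (abs_nonneg _) (hε a)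

lemma hasDerivAt_softmin_line [Nonempty A] (φ : ℝ) (z w : A → ℝ) (a : A) (t : ℝ) :
    HasDerivAt (fun t => softmin φ (fun b => z b + t * w b) a)
      (-φ * softmin φ (fun b => z b + t * w b) a
        * (w a - ∑ b, softmin φ (fun b => z b + t * w b) b * w b)) t := by
  have he : ∀ b, HasDerivAt (fun t => Real.exp (-φ * (z b + t * w b)))
      (Real.exp (-φ * (z b + t * w b)) * (-φ * w b)) t := fun b => by
    simpa using ((((hasDerivAt_id t).mul_const (w b)).const_add (z b)).const_mul (-φ)).exp
  have hS := HasDerivAt.fun_sum (u := univ) fun b _ => he b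
  have hpos : 0 < ∑ b, Real.exp (-φ * (z b + t * w b)) :=
    sum_pos (fun _ _ => Real.exp_pos _) univ_nonempty
  refine ((he a).fun_div hS hpos.ne').congr_deriv ?_
  have hmean : ∑ b, softmin φ (fun b => z b + t * w b) b * w b
      = (∑ b, Real.exp (-φ * (z b + t * w b)) * w b) / ∑ b, Real.exp (-φ * (z b + t * w b)) := by
    simp only [softmin, div_mul_eq_mul_div, sum_div]
  have hS' : ∑ b, Real.exp (-φ * (z b + t * w b)) * (-φ * w b)
      = -φ * ∑ b, Real.exp (-φ * (z b + t * w b)) * w b := by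
    rw [mul_sum]; exact sum_congr rfl fun b _ => by ring
  rw [hmean, hS', softmin]
  field_simp
  ring

lemma sum_abs_softmin_sub_le [Nonempty A] {φ d : ℝ} (hφ : 0 ≤ φ) {z z' : A → ℝ}
    (hd : ∀ a, |z' a - z a| ≤ d) :
    ∑ a, |softmin φ z' a - softmin φ z a| ≤ 2 * φ * d := by
  set w := fun a => z' a - z a
  have h1 : (fun b => z b + 1 * w b) = z' := by funext b; simp [w]
  have h0 : (fun b => z b + 0 * w b) = z := by funext b; simp
  have key := sum_abs_sub_le_of_hasDerivWithinAt (C := 2 * φ * d)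
    (fun a t _ => (hasDerivAt_softmin_line φ z w a t).hasDerivWithinAt) fun t _ => ?_
  · rwa [h1, h0] at key
  set s := softmin φ (fun b => z b + t * w b)
  have hs := isProb_softmin φ (fun b => z b + t * w b)
  have hmean : |∑ b, s b * w b| ≤ d := hs.abs_sum_mul_le hd
  calc ∑ a, |-φ * s a * (w a - ∑ b, s b * w b)| = ∑ a, s a * (φ * |w a - ∑ b, s b * w b|) := by
        refine sum_congr rfl fun a _ => ?_
        rw [abs_mul, abs_mul, abs_neg, abs_of_nonneg hφ, abs_of_nonneg (hs.1 a)]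
        ring
    _ ≤ ∑ a, s a * (2 * φ * d) := sum_le_sum fun a _ => by
        have : |w a - ∑ b, s b * w b| ≤ 2 * d := (abs_sub _ _).trans (by linarith [hd a])
        exact mul_le_mul_of_nonneg_left (by nlinarith) (hs.1 a)
    _ = 2 * φ * d := by rw [← sum_mul, hs.2, one_mul]

lemma sum_abs_sub_eq_two_mul_sum_filter_not {π π' : A → ℝ} (P : A → Prop) [DecidablePred P]
    (hπ : ∑ a, π a = 1) (hπ' : ∑ a, π' a = 1) (hle : ∀ a, P a → π a ≤ π' a)
    (hzero : ∀ a, ¬P a → π' a = 0) (hnonneg : ∀ a, ¬P a → 0 ≤ π a) :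
    ∑ a, |π a - π' a| = 2 * ∑ a ∈ univ.filter (fun a => ¬P a), π a := by
  rw [← sum_filter_add_sum_filter_not univ P π] at hπ
  rw [← sum_filter_add_sum_filter_not univ P π'] at hπ'
  rw [← sum_filter_add_sum_filter_not univ P]
  have hin : ∑ a ∈ univ.filter P, |π a - π' a| = ∑ a ∈ univ.filter P, (π' a - π a) :=
    sum_congr rfl fun a ha => by
      rw [abs_sub_comm, abs_of_nonneg (sub_nonneg.2 (hle a (mem_filter.1 ha).2))]
  have hout : ∑ a ∈ univ.filter (fun a => ¬P a), |π a - π' a|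
      = ∑ a ∈ univ.filter (fun a => ¬P a), π a :=
    sum_congr rfl fun a ha => by
      rw [hzero a (mem_filter.1 ha).2, sub_zero, abs_of_nonneg (hnonneg a (mem_filter.1 ha).2)]
  have hout' : ∑ a ∈ univ.filter (fun a => ¬P a), π' a = 0 :=
    sum_eq_zero fun a ha => hzero a (mem_filter.1 ha).2
  rw [hin, hout, sum_sub_distrib]
  linarith

lemma sum_abs_softmin_sub_argminE_le [Nonempty A] {φ δ : ℝ} (hφ : 0 ≤ φ) {q : A → ℝ}
    (hgap : ∀ a, minRow q < q a → minRow q + δ ≤ q a) :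
    ∑ a, |softmin φ q a - argminE q a| ≤ 2 * Fintype.card A * Real.exp (-(φ * δ)) := by
  set m := minRow q
  set S := univ.filter fun a => q a = m
  set Z := ∑ b, Real.exp (-φ * q b)
  have hk : 1 ≤ S.card := by
    obtain ⟨a, ha⟩ := exists_eq_minRow q
    exact card_pos.mpr ⟨a, mem_filter.2 ⟨mem_univ a, ha⟩⟩
  have hZk : S.card * Real.exp (-φ * m) ≤ Z := by
    have hS : ∑ b ∈ S, Real.exp (-φ * q b) = S.card * Real.exp (-φ * m) := by
      rw [← nsmul_eq_mul, ← sum_const]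
      exact sum_congr rfl fun b hb => by rw [(mem_filter.1 hb).2]
    exact hS ▸ sum_le_sum_of_subset_of_nonneg (filter_subset _ _)
      fun _ _ _ => (Real.exp_pos _).le
  have hZ : Real.exp (-φ * m) ≤ Z :=
    (le_mul_of_one_le_left (Real.exp_pos _).le (by exact_mod_cast hk)).trans hZk
  have hZpos : 0 < Z := (Real.exp_pos _).trans_le hZ
  have hoff : ∀ a, ¬q a = m → softmin φ q a ≤ Real.exp (-(φ * δ)) := fun a ha => by
    have hδa := hgap a (lt_of_le_of_ne (minRow_le q a) (Ne.symm ha))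
    calc softmin φ q a ≤ Real.exp (-φ * q a) / Real.exp (-φ * m) :=
          div_le_div_of_nonneg_left (Real.exp_pos _).le (Real.exp_pos _) hZ
      _ = Real.exp (-φ * (q a - m)) := by rw [← Real.exp_sub]; ring_nf
      _ ≤ Real.exp (-(φ * δ)) := Real.exp_le_exp.2 (by nlinarith)
  rw [sum_abs_sub_eq_two_mul_sum_filter_not (fun a => q a = m) (isProb_softmin φ q).2
    (isProb_argminE q).2 (fun a ha => ?_) (fun a ha => by simp only [argminE]; exact if_neg ha)
    (fun a _ => softmin_nonneg φ q a)]
  · calc 2 * ∑ a ∈ univ.filter (fun a => ¬q a = m), softmin φ q a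
        ≤ 2 * ∑ a ∈ univ.filter (fun a => ¬q a = m), Real.exp (-(φ * δ)) := by
          gcongr with a ha
          exact hoff a (mem_filter.1 ha).2
      _ ≤ 2 * ∑ _a : A, Real.exp (-(φ * δ)) := by
          gcongr
          exact filter_subset _ _
      _ = 2 * Fintype.card A * Real.exp (-(φ * δ)) := by
          rw [sum_const, card_univ, nsmul_eq_mul, mul_assoc]
  · rw [argminE, if_pos ha, softmin, ha, div_le_div_iff₀ hZpos (by positivity)]
    linarith

lemma l1_softmin_sub_argminE_le [Nonempty A] {φ δ d : ℝ} (hφ : 0 ≤ φ) {q q' : A → ℝ}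
    (hd : ∀ a, |q' a - q a| ≤ d) (hgap : ∀ a, minRow q < q a → minRow q + δ ≤ q a) :
    l1 (fun a => softmin φ q' a - argminE q a)
      ≤ 2 * φ * d + 2 * Fintype.card A * Real.exp (-(φ * δ)) := by
  have h := l1_add_le (fun a => softmin φ q' a - softmin φ q a)
    (fun a => softmin φ q a - argminE q a)
  simp only [sub_add_sub_cancel] at h
  exact h.trans (add_le_add (sum_abs_softmin_sub_le hφ hd) (sum_abs_softmin_sub_argminE_le hφ hgap))

end Softmin

section Markov

variable [Fintype X]

lemma l1_sum_mul_le_of_sum_eq_zero {σ : X → ℝ} (hσ : ∑ x, σ x = 0) {K : X → X → ℝ} {c : ℝ}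
    (hc : ∀ x' x, c ≤ K x' x) (hK : ∀ x', ∑ x, K x' x = 1) :
    l1 (fun x => ∑ x', σ x' * K x' x) ≤ (1 - Fintype.card X * c) * l1 σ := by
  have hshift : (fun x => ∑ x', σ x' * K x' x) = fun x => ∑ x', σ x' * (K x' x - c) := by
    funext x
    simp only [mul_sub, sum_sub_distrib, ← sum_mul, hσ, zero_mul, sub_zero]
  have hrow : ∀ x', l1 (fun x => K x' x - c) = 1 - Fintype.card X * c := fun x' => by
    rw [l1, sum_congr rfl fun x _ => abs_of_nonneg (sub_nonneg.2 (hc x' x)), sum_sub_distrib, hK,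
      sum_const, card_univ, nsmul_eq_mul]
  rw [hshift]
  refine (l1_sum_mul_le σ fun x' x => K x' x - c).trans_eq ?_
  simp only [hrow]
  rw [← sum_mul, mul_comm]
  rfl

lemma l1_mix_sub_mix_le [Fintype A] {π π' : A → ℝ} {P P' : A → X → ℝ} {L : ℝ}
    (hP : ∀ a, IsProb (P a)) (hπ' : IsProb π') (hL : ∀ a, l1 (fun x => P a x - P' a x) ≤ L) :
    l1 (fun x => ∑ a, π a * P a x - ∑ a, π' a * P' a x) ≤ l1 (fun a => π a - π' a) + L := by
  have hsplit : (fun x => ∑ a, π a * P a x - ∑ a, π' a * P' a x)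
      = fun x => ∑ a, (π a - π' a) * P a x + ∑ a, π' a * (P a x - P' a x) := by
    funext x
    rw [← sum_sub_distrib, ← sum_add_distrib]
    exact sum_congr rfl fun a _ => by ring
  rw [hsplit]
  refine (l1_add_le _ _).trans (add_le_add ?_ ?_)
  · refine (l1_sum_mul_le _ P).trans_eq ?_
    rw [sum_congr rfl fun a _ => by rw [(hP a).l1_eq_one, mul_one]]
    rfl
  · refine (l1_sum_mul_le π' _).trans ?_
    calc ∑ a, |π' a| * l1 (fun x => P a x - P' a x) ≤ ∑ a, π' a * L :=
          sum_le_sum fun a _ => by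
            rw [abs_of_nonneg (hπ'.1 a)]
            exact mul_le_mul_of_nonneg_left (hL a) (hπ'.1 a)
      _ = L := by rw [← sum_mul, hπ'.2, one_mul]

lemma card_mul_l1_sub_le_of_stationary {K K' : X → X → ℝ} {μ ν : X → ℝ} {c η : ℝ}
    (hc : ∀ x' x, c ≤ K x' x) (hK : ∀ x', ∑ x, K x' x = 1) (hμ : ∑ x, μ x = 1) (hν : IsProb ν)
    (hμK : ∀ x, ∑ x', μ x' * K x' x = μ x) (hνK' : ∀ x, ∑ x', ν x' * K' x' x = ν x)
    (hη : ∀ x', l1 (fun x => K x' x - K' x' x) ≤ η) :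
    Fintype.card X * c * l1 (fun x => μ x - ν x) ≤ η := by
  have hsplit : (fun x => μ x - ν x)
      = fun x => ∑ x', (μ x' - ν x') * K x' x + ∑ x', ν x' * (K x' x - K' x' x) := by
    funext x
    rw [← sum_add_distrib]
    conv_lhs => rw [← hμK x, ← hνK' x, ← sum_sub_distrib]
    exact sum_congr rfl fun x' _ => by ring
  have hσ : ∑ x, (μ x - ν x) = 0 := by rw [sum_sub_distrib, hμ, hν.2, sub_self]
  have hdrift : l1 (fun x => ∑ x', ν x' * (K x' x - K' x' x)) ≤ η :=
    (l1_sum_mul_le ν _).trans <| calc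
      ∑ x', |ν x'| * l1 (fun x => K x' x - K' x' x) ≤ ∑ x', ν x' * η :=
          sum_le_sum fun x' _ => by
            rw [abs_of_nonneg (hν.1 x')]
            exact mul_le_mul_of_nonneg_left (hη x') (hν.1 x')
      _ = η := by rw [← sum_mul, hν.2, one_mul]
  have h := l1_add_le (fun x => ∑ x', (μ x' - ν x') * K x' x)
    (fun x => ∑ x', ν x' * (K x' x - K' x' x))
  rw [← hsplit] at h
  linear_combination h + l1_sum_mul_le_of_sum_eq_zero hσ hc hK + hdrift

lemma card_mul_l1_sub_le_of_Ppush_eq [Fintype A] {p : X → A → (X → ℝ) → X → ℝ}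
    {π π' : X → A → ℝ} {μ ν : X → ℝ} {c Lp B : ℝ}
    (hμ : IsProb μ) (hν : IsProb ν) (hπ : ∀ x, IsProb (π x)) (hπ' : ∀ x, IsProb (π' x))
    (hp : ∀ x a, IsProb (p x a μ)) (hc : ∀ x a x', c ≤ p x a μ x')
    (hLp : ∀ x a, ∑ x', |p x a μ x' - p x a ν x'| ≤ Lp * l1 (fun y => μ y - ν y))
    (hB : ∀ x, l1 (fun a => π x a - π' x a) ≤ B)
    (hμfix : Ppush p π μ μ = μ) (hνfix : Ppush p π' ν ν = ν) :
    Fintype.card X * c * l1 (fun y => μ y - ν y) ≤ B + Lp * l1 (fun y => μ y - ν y) :=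
  card_mul_l1_sub_le_of_stationary (K := fun x' x => ∑ a, π x' a * p x' a μ x)
    (K' := fun x' x => ∑ a, π' x' a * p x' a ν x)
    (fun x' x => (hπ x').le_sum_mul fun a => hc x' a x) (fun x' => ((hπ x').mix (hp x')).2)
    hμ.2 hν (congrFun hμfix) (congrFun hνfix)
    fun x' => (l1_mix_sub_mix_le (hp x') (hπ' x') (hLp x')).trans (add_le_add (hB x') le_rfl)

lemma mul_l1_sub_le_of_softmin_stationary [Fintype A] [Nonempty A]
    {p : X → A → (X → ℝ) → X → ℝ} {Q Q' : X → A → ℝ} {μ ν : X → ℝ} {c Lp κ φ δ : ℝ}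
    (hμ : IsProb μ) (hν : IsProb ν) (hp : ∀ x a, IsProb (p x a μ))
    (hc : ∀ x a x', c ≤ p x a μ x')
    (hLp : ∀ x a, ∑ x', |p x a μ x' - p x a ν x'| ≤ Lp * l1 (fun y => μ y - ν y))
    (hμfix : Ppush p (fun x => softmin φ (Q' x)) μ μ = μ)
    (hνfix : Ppush p (fun x => argminE (Q x)) ν ν = ν)
    (hQ : ∀ x a, |Q' x a - Q x a| ≤ κ * l1 (fun y => μ y - ν y))
    (hgap : ∀ x a, minRow (Q x) < Q x a → minRow (Q x) + δ ≤ Q x a)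
    (hφ : 0 ≤ φ) (hδ : 0 < δ) (hκ : 0 ≤ κ)
    (hrel : Fintype.card X * c - Lp = (φ + 1 / δ) * Fintype.card A * κ) :
    κ * l1 (fun y => μ y - ν y) ≤ 2 * δ * Real.exp (-(φ * δ)) := by
  set m := l1 (fun y => μ y - ν y)
  have hκm : 0 ≤ κ * m := mul_nonneg hκ (l1_nonneg _)
  have hstab : ∀ B, (∀ x, l1 (fun a => softmin φ (Q' x) a - argminE (Q x) a) ≤ B) →
      (φ + 1 / δ) * Fintype.card A * (κ * m) ≤ B := fun B hB => by
    have := card_mul_l1_sub_le_of_Ppush_eq hμ hν (fun _ => isProb_softmin φ _)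
      (fun _ => isProb_argminE _) hp hc hLp hB hμfix hνfix
    linear_combination this - m * hrel
  rcases Nat.lt_or_ge 1 (Fintype.card A) with hA | hA
  · have hn : (2 : ℝ) ≤ Fintype.card A := by exact_mod_cast hA
    have h := hstab _ fun x => l1_softmin_sub_argminE_le hφ (hQ x) (hgap x)
    -- for `|𝒜| ≥ 2` the part `φ |𝒜| κ m` of the left side absorbs the softmin term `2 φ κ m`
    have hgain : 0 ≤ φ * (Fintype.card A - 2) * (κ * m) :=
      mul_nonneg (mul_nonneg hφ (by linarith)) hκm
    have hmain : Fintype.card A * (κ * m / δ) ≤ Fintype.card A * (2 * Real.exp (-(φ * δ))) := by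
      have : (φ + 1 / δ) * Fintype.card A * (κ * m)
          = Fintype.card A * (κ * m / δ) + φ * Fintype.card A * (κ * m) := by ring
      linarith
    have := (div_le_iff₀ hδ).1 (le_of_mul_le_mul_left hmain (by positivity))
    linarith
  · have h := hstab 0 fun x => (l1_sub_eq_zero_of_card_eq_one (le_antisymm hA Fintype.card_pos)
      (isProb_softmin φ _).2 (isProb_argminE _).2).le
    have : κ * m ≤ 0 := nonpos_of_mul_nonpos_right (by linarith)
      (by positivity : (0 : ℝ) < (φ + 1 / δ) * Fintype.card A)
    exact this.trans (by positivity)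

end Markov

theorem mfg_accuracy_optimized_general [Fintype X] [Fintype A] [Nonempty X] [Nonempty A]
    (γ : ℝ) (hγ0 : 0 < γ) (hγ1 : γ < 1)
    (f : X → A → (X → ℝ) → ℝ) (fnorm : ℝ)
    (hf : ∀ x a μ, IsProb μ → |f x a μ| ≤ fnorm)
    (p : X → A → (X → ℝ) → X → ℝ)
    (hp0 : ∀ x a μ x', IsProb μ → 0 ≤ p x a μ x')
    (hp1 : ∀ x a μ, IsProb μ → ∑ x', p x a μ x' = 1)
    (cmin Lf Lp : ℝ)
    (hcmin : ∀ x a μ x', IsProb μ → cmin ≤ p x a μ x')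
    (hLf : ∀ x a μ μ', IsProb μ → IsProb μ' →
      |f x a μ - f x a μ'| ≤ Lf * l1 (fun y => μ y - μ' y))
    (hLp : ∀ x a μ μ', IsProb μ → IsProb μ' →
      ∑ x', |p x a μ x' - p x a μ' x'| ≤ Lp * l1 (fun y => μ y - μ' y))
    (hLpc : Lp < (Fintype.card X : ℝ) * cmin)
    (φmax : ℝ)
    (hφmaxdef : φmax = ((Fintype.card X : ℝ) * cmin - Lp) / (Fintype.card A : ℝ)
        * ((1 - γ) / (Lf + (γ / (1 - γ)) * Lp * fnorm)))
    -- Q*_μ : the unique fixed point of B_μ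
    (Qstar : (X → ℝ) → X → A → ℝ)
    (hQstar : ∀ μ, IsProb μ → bell f p γ μ (Qstar μ) = Qstar μ)
    -- the unique MFG equilibrium (μ̂, Q*_{μ̂}, π̂) with π̂ = argmin_e Q*_{μ̂}
    (μhat : X → ℝ) (hμhat : IsProb μhat)
    (hμhatfix : Ppush p (fun x' => argminE (Qstar μhat x')) μhat μhat = μhat)
    -- δ is (a positive lower bound for) the action gap of Q*_{μ̂}
    (δ : ℝ) (hδ0 : 0 < δ)
    (hgap : ∀ x a, minRow (Qstar μhat x) < Qstar μhat x a →
      minRow (Qstar μhat x) + δ ≤ Qstar μhat x a)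
    (hφδ : 0 < φmax - 1 / δ)
    -- the optimized smoothing parameter
    (φ : ℝ) (hφdef : φ = φmax - 1 / δ)
    -- μ*φ : the unique fixed point of μ ↦ P^{softmin_φ Q*_μ, μ} μ
    (μstar : X → ℝ) (hμstar : IsProb μstar)
    (hμstarfix : Ppush p (fun x' => softmin φ (Qstar μstar x')) μstar μstar = μstar) :
    l1 (fun x => μstar x - μhat x)
        ≤ 2 * Real.sqrt (Fintype.card A) * δ * (1 - γ)
            / (Lf + (γ / (1 - γ)) * Lp * fnorm) * Real.exp (1 - φmax * δ)
    ∧ supQ (fun x a => Qstar μstar x a - Qstar μhat x a)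
        ≤ 2 * Real.sqrt (Fintype.card A) * δ * Real.exp (1 - φmax * δ) := by
  have h1γ : 0 < 1 - γ := by linarith
  have hprob : ∀ x a μ, IsProb μ → IsProb (p x a μ) := fun x a μ hμ =>
    ⟨(hp0 x a μ · hμ), hp1 x a μ hμ⟩
  set D := Lf + γ / (1 - γ) * Lp * fnorm
  have hD : 0 < D := by
    have hφmax : 0 < φmax := by linarith [one_div_pos.2 hδ0]
    rw [hφmaxdef] at hφmax
    exact (div_pos_iff_of_pos_left h1γ).1
      (pos_of_mul_pos_right hφmax (div_pos (by linarith) (by positivity)).le)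
  set κ := D / (1 - γ) with hκdef
  have hκ : 0 < κ := div_pos hD h1γ
  set m := l1 (fun x => μstar x - μhat x)
  have hQ : supQ (fun x a => Qstar μstar x a - Qstar μhat x a) ≤ κ * m :=
    supQ_sub_le_of_bell_eq hγ0.le hγ1 (hLf · · _ _ hμstar hμhat) (hLp · · _ _ hμstar hμhat)
      (hprob · · _ hμstar) (hQstar _ hμstar) (hQstar _ hμhat)
      (abs_le_of_bell_eq hγ0.le hγ1 (hf · · _ hμhat) (hprob · · _ hμhat) (hQstar _ hμhat))
  have hκm := mul_l1_sub_le_of_softmin_stationary hμstar hμhat (hprob · · _ hμstar)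
    (hcmin · · _ · hμstar) (hLp · · _ _ hμstar hμhat) hμstarfix hμhatfix
    (fun x a => (abs_le_supQ _ x a).trans hQ) hgap (hφdef ▸ hφδ).le hδ0 hκ.le
    (by rw [hφdef, sub_add_cancel, hφmaxdef, hκdef]; field_simp)
  rw [show -(φ * δ) = 1 - φmax * δ by rw [hφdef]; field_simp; ring] at hκm
  have hsqrt : 2 * δ * Real.exp (1 - φmax * δ)
      ≤ 2 * √(Fintype.card A : ℝ) * δ * Real.exp (1 - φmax * δ) := by
    have : 1 ≤ √(Fintype.card A : ℝ) := Real.one_le_sqrt.2 (by exact_mod_cast Fintype.card_pos)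
    nlinarith [mul_pos hδ0 (Real.exp_pos (1 - φmax * δ))]
  refine ⟨?_, hQ.trans (hκm.trans hsqrt)⟩
  rw [div_mul_eq_mul_div, le_div_iff₀ hD]
  calc m * D = (1 - γ) * (κ * m) := by
        rw [hκdef]; field_simp
    _ ≤ _ := by nlinarith [hκm.trans hsqrt]

/-- optimized accuracy of the soft-min MFG fixed point when
φ = φ_max − 1/δ. -/
theorem mfg_accuracy_optimized [Fintype X] [Fintype A] [Nonempty X] [Nonempty A]
    (γ : ℝ) (hγ0 : 0 < γ) (hγ1 : γ < 1)
    (f : X → A → (X → ℝ) → ℝ) (fnorm : ℝ)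
    (hf : ∀ x a μ, IsProb μ → |f x a μ| ≤ fnorm)
    (p : X → A → (X → ℝ) → X → ℝ)
    (hp0 : ∀ x a μ x', IsProb μ → 0 ≤ p x a μ x')
    (hp1 : ∀ x a μ, IsProb μ → ∑ x', p x a μ x' = 1)
    (cmin Lf Lp : ℝ) (hcmin0 : 0 ≤ cmin)
    (hcmin : ∀ x a μ x', IsProb μ → cmin ≤ p x a μ x')
    (hLf0 : 0 ≤ Lf) (hLp0 : 0 ≤ Lp)
    (hLf : ∀ x a μ μ', IsProb μ → IsProb μ' →
      |f x a μ - f x a μ'| ≤ Lf * l1 (fun y => μ y - μ' y))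
    (hLp : ∀ x a μ μ', IsProb μ → IsProb μ' →
      ∑ x', |p x a μ x' - p x a μ' x'| ≤ Lp * l1 (fun y => μ y - μ' y))
    (hLpc : Lp < (Fintype.card X : ℝ) * cmin)
    (φmax : ℝ)
    (hφmaxdef : φmax = ((Fintype.card X : ℝ) * cmin - Lp) / (Fintype.card A : ℝ)
        * ((1 - γ) / (Lf + (γ / (1 - γ)) * Lp * fnorm)))
    -- Q*_μ : the unique fixed point of B_μ
    (Qstar : (X → ℝ) → X → A → ℝ)
    (hQstar : ∀ μ, IsProb μ → bell f p γ μ (Qstar μ) = Qstar μ)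
    -- the unique MFG equilibrium (μ̂, Q*_{μ̂}, π̂) with π̂ = argmin_e Q*_{μ̂}
    (μhat : X → ℝ) (hμhat : IsProb μhat)
    (hμhatfix : Ppush p (fun x' => argminE (Qstar μhat x')) μhat μhat = μhat)
    (huniq : ∀ μ : X → ℝ, IsProb μ →
      Ppush p (fun x' => argminE (Qstar μ x')) μ μ = μ → μ = μhat)
    -- δ is (a positive lower bound for) the action gap of Q*_{μ̂}
    (δ : ℝ) (hδ0 : 0 < δ)
    (hgap : ∀ x a, minRow (Qstar μhat x) < Qstar μhat x a →
      minRow (Qstar μhat x) + δ ≤ Qstar μhat x a)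
    (hφδ : 0 < φmax - 1 / δ)
    -- the optimized smoothing parameter
    (φ : ℝ) (hφdef : φ = φmax - 1 / δ)
    -- μ*φ : the unique fixed point of μ ↦ P^{softmin_φ Q*_μ, μ} μ
    (μstar : X → ℝ) (hμstar : IsProb μstar)
    (hμstarfix : Ppush p (fun x' => softmin φ (Qstar μstar x')) μstar μstar = μstar) :
    l1 (fun x => μstar x - μhat x)
        ≤ 2 * Real.sqrt (Fintype.card A) * δ * (1 - γ)
            / (Lf + (γ / (1 - γ)) * Lp * fnorm) * Real.exp (1 - φmax * δ)
    ∧ supQ (fun x a => Qstar μstar x a - Qstar μhat x a)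
        ≤ 2 * Real.sqrt (Fintype.card A) * δ * Real.exp (1 - φmax * δ) :=
  mfg_accuracy_optimized_general γ hγ0 hγ1 f fnorm hf p hp0 hp1 cmin Lf Lp hcmin hLf hLp hLpc φmax
    hφmaxdef Qstar hQstar μhat hμhat hμhatfix δ hδ0 hgap hφδ φ hφdef μstar hμstar hμstarfix
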